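/- Let w = w[1]⋯w[n] ∈ {0,1,2}^* with k = |w|_2 ≥ 1 occurrences of the symbol 2. Then T_$ ∘ T_{w[n]} ∘ ⋯ ∘ T_{w[1]} applied to the vector |p0,0⟩ + |p1,0⟩ − |p2,0⟩ equals |p3,0⟩ if w^r[k] = 1, and equals |p4,0⟩ otherwise (i.e., if w^r[k] ∈ {0,2}). In particular this exactly decides membership of w in END = { w : |w|_2 ≥ 1 and w^r[|w|_2] = 1 }. -/

import Mathlib

/-!
Write `ket12 c = |p1,c⟩ − |p2,c⟩` and `ket34 c = |p3,c⟩ − |p4,c⟩`; the start vector is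
`|p0,0⟩ + ket12 0`. Every `T_σ` fixes `|p0,0⟩`, while on `ket12 c` it lowers the counter by one
if `σ = 2` and emits `± ½ ket34` (sign `+` iff `σ = 1`). An emitted `ket34` moves up by one on each
later `0` or `1`, so after reading `w` (length `n`, with `k` twos) the symbol at 0-based position `i`
has left `± ½ ket34 (n - i - k)`. The end marker kills `ket12 c` and every `ket34 c` with `c ≠ 0`,
fixes `ket34 0`, and sends `|p0,0⟩` to `½ (|p3,0⟩ + |p4,0⟩)`. Only the symbol at position `n - k`,
which is `w^r[k]`, survives, and its sign selects `|p3,0⟩` or `|p4,0⟩`.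
-/

/-- The five affine states `p0, …, p4`. -/
inductive St : Type
  | p0 | p1 | p2 | p3 | p4
  deriving DecidableEq

/-- The real vector space of finitely supported functions from `St × ℤ` to `ℝ`. -/
abbrev V : Type := (St × ℤ) →₀ ℝ

/-- The basis vector `|p,c⟩`. -/
noncomputable def ket (p : St) (c : ℤ) : V := Finsupp.single (p, c) 1

/-- Action of `T_0` on basis vectors. -/
noncomputable def img0 : St × ℤ → V
  | (.p0, c) => ket .p0 c
  | (.p1, c) => ket .p1 c - (1 / 2 : ℝ) • ket .p3 (c + 1) + (1 / 2 : ℝ) • ket .p4 (c + 1)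
  | (.p2, c) => ket .p2 c
  | (.p3, c) => ket .p3 (c + 1)
  | (.p4, c) => ket .p4 (c + 1)

/-- Action of `T_1` on basis vectors. -/
noncomputable def img1 : St × ℤ → V
  | (.p0, c) => ket .p0 c
  | (.p1, c) => ket .p1 c + (1 / 2 : ℝ) • ket .p3 (c + 1) - (1 / 2 : ℝ) • ket .p4 (c + 1)
  | (.p2, c) => ket .p2 c
  | (.p3, c) => ket .p3 (c + 1)
  | (.p4, c) => ket .p4 (c + 1)

/-- Action of `T_2` on basis vectors. -/
noncomputable def img2 : St × ℤ → V
  | (.p0, c) => ket .p0 c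
  | (.p1, c) => ket .p1 (c - 1) - (1 / 2 : ℝ) • ket .p3 c + (1 / 2 : ℝ) • ket .p4 c
  | (.p2, c) => ket .p2 (c - 1)
  | (.p3, c) => ket .p3 c
  | (.p4, c) => ket .p4 c

/-- Action of the end-marker map `T_$` on basis vectors. -/
noncomputable def imgD : St × ℤ → V
  | (.p0, c) => if c = 0 then (1 / 2 : ℝ) • ket .p3 0 + (1 / 2 : ℝ) • ket .p4 0 else ket .p0 c
  | (.p1, c) => ket .p1 c
  | (.p2, c) => ket .p1 c
  | (.p3, c) => ket .p3 c
  | (.p4, c) => if c = 0 then ket .p4 0 else ket .p3 c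

/-- The linear map `T_0`. -/
noncomputable def T0 : V →ₗ[ℝ] V :=
  Finsupp.lsum ℝ fun pc => LinearMap.toSpanSingleton ℝ V (img0 pc)

/-- The linear map `T_1`. -/
noncomputable def T1 : V →ₗ[ℝ] V :=
  Finsupp.lsum ℝ fun pc => LinearMap.toSpanSingleton ℝ V (img1 pc)

/-- The linear map `T_2`. -/
noncomputable def T2 : V →ₗ[ℝ] V :=
  Finsupp.lsum ℝ fun pc => LinearMap.toSpanSingleton ℝ V (img2 pc)

/-- The end-marker linear map `T_$`. -/
noncomputable def TD : V →ₗ[ℝ] V :=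
  Finsupp.lsum ℝ fun pc => LinearMap.toSpanSingleton ℝ V (imgD pc)

/-- The transition map associated to an input symbol in `{0,1,2}`. -/
noncomputable def Tsym (σ : Fin 3) : V →ₗ[ℝ] V :=
  if σ = 0 then T0 else if σ = 1 then T1 else T2

/-- `run w v = (T_{w[n]} ∘ ⋯ ∘ T_{w[1]}) v`. -/
noncomputable def run (w : List (Fin 3)) (v : V) : V :=
  w.foldl (fun v σ => Tsym σ v) v

/-- The language `END ⊆ {0,1,2}^*`: strings containing at least one symbol `2`
whose reverse has the symbol `1` at (1-based) position `|w|₂` (the number of `2`s in `w`). -/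
def LangEND : Set (List (Fin 3)) :=
  {w | 1 ≤ w.count 2 ∧ w.reverse.getD (w.count 2 - 1) 0 = 1}

lemma TD_ket (p : St) (c : ℤ) : TD (ket p c) = imgD (p, c) := by
  simp [TD, ket]

lemma Tsym_ket (σ : Fin 3) (p : St) (c : ℤ) :
    Tsym σ (ket p c) = if σ = 0 then img0 (p, c) else if σ = 1 then img1 (p, c) else img2 (p, c) := by
  unfold Tsym
  split_ifs <;> simp [T0, T1, T2, ket]

noncomputable def ket12 (c : ℤ) : V := ket .p1 c - ket .p2 c

noncomputable def ket34 (c : ℤ) : V := ket .p3 c - ket .p4 c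

def sgn (σ : Fin 3) : ℝ := if σ = 1 then 1 else -1

lemma count_two_singleton (σ : Fin 3) : [σ].count 2 = if σ = 2 then 1 else 0 := by
  fin_cases σ <;> rfl

lemma Tsym_ket_p0 (σ : Fin 3) (c : ℤ) : Tsym σ (ket .p0 c) = ket .p0 c := by
  rw [Tsym_ket]; split_ifs <;> rfl

lemma Tsym_ket34 (σ : Fin 3) (c : ℤ) :
    Tsym σ (ket34 c) = ket34 (c + 1 - [σ].count 2) := by
  rw [ket34, map_sub, Tsym_ket, Tsym_ket, count_two_singleton]
  fin_cases σ <;> simp [img0, img1, img2, ket34]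

lemma Tsym_ket12 (σ : Fin 3) (c : ℤ) :
    Tsym σ (ket12 c) =
      ket12 (c - [σ].count 2) + (sgn σ / 2) • ket34 (c + 1 - [σ].count 2) := by
  rw [ket12, map_sub, Tsym_ket, Tsym_ket, count_two_singleton]
  fin_cases σ <;> simp [img0, img1, img2, ket12, ket34, sgn] <;> module

lemma run_append_singleton (w : List (Fin 3)) (σ : Fin 3) (v : V) :
    run (w ++ [σ]) v = Tsym σ (run w v) := by
  simp [run, List.foldl_append]

lemma run_add (w : List (Fin 3)) (u v : V) : run w (u + v) = run w u + run w v := by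
  induction w using List.reverseRecOn with
  | nil => rfl
  | append_singleton w σ ih => simp only [run_append_singleton, ih, map_add]

lemma run_ket_p0 (w : List (Fin 3)) (c : ℤ) : run w (ket .p0 c) = ket .p0 c := by
  induction w using List.reverseRecOn with
  | nil => rfl
  | append_singleton w σ ih => rw [run_append_singleton, ih, Tsym_ket_p0]

lemma run_ket12 (w : List (Fin 3)) (c : ℤ) :
    run w (ket12 c) = ket12 (c - w.count 2) +
      ∑ i ∈ Finset.range w.length,
        (sgn (w.getD i 0) / 2) • ket34 (c + w.length - i - w.count 2) := by
  induction w using List.reverseRecOn with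
  | nil => simp [run]
  | append_singleton w σ ih =>
    have hsum : ∑ i ∈ Finset.range w.length,
        Tsym σ ((sgn (w.getD i 0) / 2) • ket34 (c + w.length - i - w.count 2)) =
        ∑ i ∈ Finset.range w.length, (sgn ((w ++ [σ]).getD i 0) / 2) •
          ket34 (c + (w ++ [σ]).length - i - (w ++ [σ]).count 2) := by
      refine Finset.sum_congr rfl fun i hi => ?_
      rw [map_smul, Tsym_ket34, List.getD_append _ _ _ _ (Finset.mem_range.mp hi),
        List.length_append, List.length_singleton, List.count_append]
      congr 2
      push_cast
      ring
    have hlast : (w ++ [σ]).getD w.length 0 = σ := by simp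
    rw [run_append_singleton, ih, map_add, map_sum, hsum, Tsym_ket12, List.length_append,
      List.length_singleton, Finset.sum_range_succ, hlast, List.count_append]
    push_cast
    rw [sub_sub c, show c + ((w.length : ℤ) + 1) - w.length - (w.count 2 + [σ].count 2) =
      c - w.count 2 + 1 - [σ].count 2 by ring]
    ac_rfl

lemma TD_ket_p0_zero : TD (ket .p0 0) = (1 / 2 : ℝ) • ket .p3 0 + (1 / 2 : ℝ) • ket .p4 0 := by
  simp [TD_ket, imgD]

lemma TD_ket12 (c : ℤ) : TD (ket12 c) = 0 := by
  simp [ket12, TD_ket, imgD]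

lemma TD_ket34 (c : ℤ) : TD (ket34 c) = if c = 0 then ket34 0 else 0 := by
  by_cases hc : c = 0 <;> simp [ket34, TD_ket, imgD, hc]

theorem TD_run_initial (w : List (Fin 3)) (hk : 1 ≤ w.count 2) :
    TD (run w (ket .p0 0 + ket .p1 0 - ket .p2 0)) =
      if w.getD (w.length - w.count 2) 0 = 1 then ket .p3 0 else ket .p4 0 := by
  have hkn : w.count 2 ≤ w.length := List.count_le_length
  have hsum : ∑ i ∈ Finset.range w.length, (sgn (w.getD i 0) / 2) •
      TD (ket34 (w.length - i - w.count 2)) =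
      (sgn (w.getD (w.length - w.count 2) 0) / 2) • ket34 0 := by
    simp only [TD_ket34, smul_ite, smul_zero]
    rw [Finset.sum_ite, Finset.sum_const_zero, add_zero, Finset.sum_eq_single_of_mem]
    · simp only [Finset.mem_filter, Finset.mem_range]; omega
    · intro j hj hne; simp only [Finset.mem_filter] at hj; omega
  rw [add_sub_assoc, ← ket12, run_add, run_ket_p0, run_ket12, zero_add, map_add, map_add, map_sum,
    TD_ket_p0_zero, TD_ket12]
  simp only [map_smul, hsum]
  unfold sgn
  split_ifs <;> simp only [ket34] <;> module

lemma ket_p4_ne_ket_p3 : ket .p4 0 ≠ ket .p3 0 := by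
  simp [ket, Finsupp.single_left_inj one_ne_zero]

theorem stmt_13 (w : List (Fin 3)) (hk : 1 ≤ w.count 2) :
    (TD (run w (ket .p0 0 + ket .p1 0 - ket .p2 0)) =
      if w.reverse.getD (w.count 2 - 1) 0 = 1 then ket .p3 0 else ket .p4 0) ∧
    (TD (run w (ket .p0 0 + ket .p1 0 - ket .p2 0)) = ket .p3 0 ↔ w ∈ LangEND) := by
  have hkn : w.count 2 ≤ w.length := List.count_le_length
  have hrev : w.reverse.getD (w.count 2 - 1) 0 = w.getD (w.length - w.count 2) 0 := by
    rw [List.getD_reverse _ (by omega)]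
    congr 1
    omega
  have hTD := TD_run_initial w hk
  rw [← hrev] at hTD
  refine ⟨hTD, ?_⟩
  rw [hTD]
  simp only [LangEND, Set.mem_ofPred_eq, hk, true_and]
  split_ifs with h1
  · exact iff_of_true rfl h1
  · exact iff_of_false ket_p4_ne_ket_p3 h1
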